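/- Inverse-function characterization of the generalized sine: let m ≥ 1 be an integer and s a generalized sine function of order m. Then s is strictly increasing on the interval [0, π_m/2], s(π_m/2) = 1, and for every y ∈ [0, π_m/2] one has ∫₀^{s(y)} (1 − t^{2m})^{−1/2} dt = y; i.e. on [0, π_m/2] the function s is the inverse of F(x) = ∫₀^x (1 − t^{2m})^{−1/2} dt. -/

import Mathlib

/-- A generalized sine function of order `m ≥ 1`: a twice continuously differentiable
function `s : ℝ → ℝ` with `s'' = -m * s^(2m-1)`, `s 0 = 0` and `s' 0 = 1`. -/
def IsGenSine (m : ℕ) (s : ℝ → ℝ) : Prop :=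
  ContDiff ℝ 2 s ∧ (∀ x : ℝ, deriv (deriv s) x = -(m : ℝ) * s x ^ (2 * m - 1)) ∧
    s 0 = 0 ∧ deriv s 0 = 1

/-- The generalized half-period `π_m := 2 ∫₀¹ (1 - t^(2m))^(-1/2) dt`. -/
noncomputable def piGen (m : ℕ) : ℝ :=
  2 * ∫ t in (0:ℝ)..(1:ℝ), ((1 - t ^ (2 * m) : ℝ) ^ (-(1:ℝ)/2))

open Set MeasureTheory intervalIntegral

noncomputable def gfun (m : ℕ) : ℝ → ℝ := fun t => (1 - t ^ (2 * m) : ℝ) ^ (-(1:ℝ)/2)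

lemma gfun_meas (m : ℕ) : Measurable (gfun m) := by
  have : gfun m = fun t => if 0 < 1 - t ^ (2*m) then
      Real.exp (Real.log (1 - t ^ (2*m)) * (-(1:ℝ)/2)) else 0 := by
    funext t
    unfold gfun
    split_ifs with h
    · rw [Real.rpow_def_of_pos h]
    · push_neg at h
      rcases eq_or_lt_of_le h with h | h
      · rw [h, Real.zero_rpow (by norm_num)]
      · rw [Real.rpow_def_of_neg h]
        have : (-(1:ℝ)/2) * Real.pi = -(Real.pi/2) := by ring
        simp [this, Real.cos_pi_div_two]
  rw [this]
  have hb : Measurable fun t : ℝ => 1 - t ^ (2*m) :=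
    measurable_const.sub (measurable_id.pow_const _)
  exact Measurable.ite (measurableSet_lt measurable_const hb)
    ((Real.measurable_log.comp hb).mul_const _).exp measurable_const

lemma gfun_nonneg (m : ℕ) (t : ℝ) (h : t ^ (2*m) ≤ 1) : 0 ≤ gfun m t :=
  Real.rpow_nonneg (by linarith) _

lemma gfun_zero_of (m : ℕ) (t : ℝ) (h : 1 ≤ t ^ (2*m)) : gfun m t = 0 := by
  rcases eq_or_lt_of_le h with h | h
  · simp [gfun, ← h, Real.zero_rpow]
  · unfold gfun
    rw [Real.rpow_def_of_neg (by linarith)]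
    have : (-(1:ℝ)/2) * Real.pi = -(Real.pi/2) := by ring
    simp [this, Real.cos_pi_div_two]

lemma gfun_pos (m : ℕ) (t : ℝ) (h : t ^ (2*m) < 1) : 0 < gfun m t :=
  Real.rpow_pos_of_pos (by linarith) _

lemma gfun_int01 (m : ℕ) (hm : 1 ≤ m) : IntervalIntegrable (gfun m) volume 0 1 := by
  have hb : IntervalIntegrable (fun t : ℝ => (1 - t) ^ (-(1:ℝ)/2)) volume 0 1 := by
    have := ((intervalIntegrable_rpow' (a := 0) (b := 1)
      (r := -(1:ℝ)/2) (by norm_num)).comp_sub_left 1).symm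
    simpa using this
  apply hb.mono_fun ((gfun_meas m).aestronglyMeasurable.restrict)
  · filter_upwards [ae_restrict_mem measurableSet_uIoc] with t ht
    rw [uIoc_of_le (by norm_num : (0:ℝ) ≤ 1)] at ht
    obtain ⟨ht0, ht1⟩ := ht
    have hp : t ^ (2*m) ≤ 1 := pow_le_one₀ ht0.le ht1
    rw [Real.norm_of_nonneg (gfun_nonneg m t hp),
      Real.norm_of_nonneg (Real.rpow_nonneg (by linarith) _)]
    rcases eq_or_lt_of_le ht1 with h1 | h1
    · subst h1
      rw [gfun_zero_of m 1 (by simp)]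
      simp
    · have h2 : t ^ (2*m) ≤ t := by
        calc t ^ (2*m) ≤ t ^ 1 := pow_le_pow_of_le_one ht0.le h1.le (by omega)
        _ = t := pow_one t
      exact Real.rpow_le_rpow_of_nonpos (by linarith) (by linarith) (by norm_num)

lemma gfun_integrable (m : ℕ) (hm : 1 ≤ m) : Integrable (gfun m) := by
  have heven : ∀ t : ℝ, gfun m (-t) = gfun m t := by
    intro t; unfold gfun; rw [(even_two_mul m).neg_pow]
  have hneg : IntervalIntegrable (gfun m) volume (-1) 0 := by
    have := ((gfun_int01 m hm).comp_sub_left 0)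
    have h2 : (fun x => gfun m (0 - x)) = gfun m := by
      funext x; rw [zero_sub, heven]
    rw [h2] at this
    simpa using this.symm
  have hmid : IntegrableOn (gfun m) (Ioc (-1:ℝ) 1) := by
    have := (hneg.trans (gfun_int01 m hm))
    rw [intervalIntegrable_iff, uIoc_of_le (by norm_num : (-1:ℝ) ≤ 1)] at this
    exact this
  have hleft : IntegrableOn (gfun m) (Iic (-1:ℝ)) := by
    have : EqOn (gfun m) 0 (Iic (-1:ℝ)) := by
      intro t ht
      apply gfun_zero_of
      simp only [mem_Iic] at ht
      calc (1:ℝ) = 1 ^ (2*m) := by simp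
      _ ≤ |t| ^ (2*m) := by
        apply pow_le_pow_left₀ (by norm_num)
        rw [abs_of_nonpos (by linarith)]; linarith
      _ = t ^ (2*m) := by
        rw [← abs_pow, abs_of_nonneg ((even_two_mul m).pow_nonneg t)]
    exact (integrableOn_congr_fun this measurableSet_Iic).mpr (integrableOn_zero)
  have hright : IntegrableOn (gfun m) (Ioi (1:ℝ)) := by
    have : EqOn (gfun m) 0 (Ioi (1:ℝ)) := by
      intro t ht
      simp only [mem_Ioi] at ht
      apply gfun_zero_of
      calc (1:ℝ) = 1 ^ (2*m) := by simp
      _ ≤ t ^ (2*m) := pow_le_pow_left₀ (by norm_num) ht.le _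
    exact (integrableOn_congr_fun this measurableSet_Ioi).mpr (integrableOn_zero)
  rw [← integrableOn_univ]
  have : (univ : Set ℝ) = Iic (-1) ∪ (Ioc (-1) 1 ∪ Ioi 1) := by
    ext t
    simp only [mem_univ, mem_union, mem_Iic, mem_Ioc, mem_Ioi, true_iff]
    rcases le_or_gt t (-1) with h | h
    · tauto
    · rcases le_or_gt t 1 with h2 | h2 <;> tauto
  rw [this]
  exact hleft.union (hmid.union hright)


section energy
variable {m : ℕ} {s : ℝ → ℝ} (hm : 1 ≤ m) (hs : IsGenSine m s)
include hm hs

lemma sine_diff : Differentiable ℝ s := hs.1.differentiable (by norm_num)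

lemma sine_deriv_contdiff : ContDiff ℝ 1 (deriv s) := by
  have h2 : ContDiff ℝ ((1:ℕ) + 1) s := by exact_mod_cast hs.1
  exact (contDiff_succ_iff_deriv.mp h2).2.2

lemma sine_deriv_diff : Differentiable ℝ (deriv s) :=
  (sine_deriv_contdiff hm hs).differentiable one_ne_zero

lemma sine_deriv_cont : Continuous (deriv s) :=
  (sine_deriv_diff hm hs).continuous

lemma sine_energy : ∀ x : ℝ, deriv s x ^ 2 + s x ^ (2 * m) = 1 := by
  intro x
  set E : ℝ → ℝ := fun x => deriv s x ^ 2 + s x ^ (2 * m) with hE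
  have hdE : ∀ y : ℝ, HasDerivAt E 0 y := by
    intro y
    have h1 : HasDerivAt (fun x => deriv s x ^ 2)
        (2 * deriv s y ^ 1 * deriv (deriv s) y) y :=
      ((sine_deriv_diff hm hs y).hasDerivAt).pow 2
    have h2 : HasDerivAt (fun x => s x ^ (2*m))
        ((2*m : ℕ) * s y ^ (2*m - 1) * deriv s y) y :=
      ((sine_diff hm hs y).hasDerivAt).pow (2*m)
    have := h1.add h2
    rw [hs.2.1 y] at this
    convert (show HasDerivAt E _ y from this) using 1
    push_cast
    ring
  have hconst := is_const_of_deriv_eq_zero (f := E)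
    (fun y => ((hdE y).differentiableAt))
    (fun y => (hdE y).deriv) x 0
  have hE0 : E 0 = 1 := by
    simp only [hE, hs.2.2.1, hs.2.2.2]
    rw [zero_pow (by omega)]
    norm_num
  rw [← hE0]
  exact hconst

lemma sine_sq_le (x : ℝ) : s x ^ (2*m) ≤ 1 := by
  have := sine_energy hm hs x
  nlinarith [sq_nonneg (deriv s x)]

lemma sine_pow_nonneg (x : ℝ) : 0 ≤ s x ^ (2*m) := (even_two_mul m).pow_nonneg _

end energy

noncomputable def Ffun (m : ℕ) : ℝ → ℝ := fun x => ∫ t in (0:ℝ)..x, gfun m t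

lemma Ffun_cont (m : ℕ) (hm : 1 ≤ m) : Continuous (Ffun m) :=
  intervalIntegral.continuous_primitive
    (fun a b => (gfun_integrable m hm).intervalIntegrable) 0

lemma Ffun_zero (m : ℕ) : Ffun m 0 = 0 := integral_same

lemma Ffun_lt (m : ℕ) (hm : 1 ≤ m) {a : ℝ} (h0 : 0 ≤ a) (h1 : a < 1) :
    Ffun m a < Ffun m 1 := by
  have hint : ∀ u v : ℝ, IntervalIntegrable (gfun m) volume u v :=
    fun u v => (gfun_integrable m hm).intervalIntegrable
  have hsub : Ffun m 1 - Ffun m a = ∫ t in a..1, gfun m t :=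
    integral_interval_sub_left (hint 0 1) (hint 0 a)
  have hpos : (0:ℝ) < ∫ t in a..1, gfun m t := by
    apply intervalIntegral_pos_of_pos_on (hint a 1) _ h1
    intro x hx
    exact gfun_pos m x (pow_lt_one₀ (h0.trans hx.1.le) hx.2 (by omega))
  linarith

lemma Ffun_hasDeriv (m : ℕ) (hm : 1 ≤ m) {u : ℝ} (hu : u ^ (2*m) < 1) :
    HasDerivAt (Ffun m) (gfun m u) u := by
  apply integral_hasDerivAt_right ((gfun_integrable m hm).intervalIntegrable)
    ⟨univ, Filter.univ_mem, (gfun_meas m).aestronglyMeasurable.restrict⟩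
  show ContinuousAt (gfun m) u
  unfold gfun
  exact ((continuous_const.sub (continuous_pow (2*m))).continuousAt).rpow_const
    (Or.inl (ne_of_gt (by simp only [Pi.sub_apply]; linarith)))

lemma sine_inverts {m : ℕ} {s : ℝ → ℝ} (hm : 1 ≤ m) (hs : IsGenSine m s) {b : ℝ}
    (hpos : ∀ t ∈ Ico 0 b, 0 < deriv s t) : ∀ x ∈ Icc 0 b, Ffun m (s x) = x := by
  have hcont : ContinuousOn (fun t => Ffun m (s t) - t) (Icc 0 b) :=
    (((Ffun_cont m hm).comp (sine_diff hm hs).continuous).sub continuous_id).continuousOn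
  have hderiv : ∀ x ∈ Ico 0 b, HasDerivWithinAt (fun t => Ffun m (s t) - t) 0 (Ici x) x := by
    intro x hx
    have hpx := hpos x hx
    have hen := sine_energy hm hs x
    have hu : s x ^ (2*m) < 1 := by nlinarith
    have hF := Ffun_hasDeriv m hm hu
    have hcomp := hF.comp x ((sine_diff hm hs x).hasDerivAt)
    have hval : gfun m (s x) * deriv s x = 1 := by
      have hd : deriv s x = Real.sqrt (1 - s x ^ (2*m)) := by
        rw [show 1 - s x ^ (2*m) = deriv s x ^ 2 by linarith, Real.sqrt_sq hpx.le]
      rw [hd, Real.sqrt_eq_rpow]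
      unfold gfun
      rw [← Real.rpow_add (by linarith)]
      norm_num
    have h2 := hcomp.sub (hasDerivAt_id x)
    rw [hval] at h2
    have h3 : HasDerivWithinAt (fun t => Ffun m (s t) - t) (1 - 1) (Ici x) x := h2.hasDerivWithinAt
    rw [sub_self] at h3
    exact h3
  intro x hx
  have := constant_of_has_deriv_right_zero hcont hderiv x hx
  simp only [hs.2.2.1, Ffun_zero, sub_zero] at this
  linarith



/-- on `[0, π_m/2]` the generalized sine is strictly increasing,
`s(π_m/2) = 1`, and it inverts `F(x) = ∫₀^x (1 - t^(2m))^(-1/2) dt`. -/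
theorem generalized_sine_inverse (m : ℕ) (hm : 1 ≤ m) (s : ℝ → ℝ)
    (hs : IsGenSine m s) :
    StrictMonoOn s (Set.Icc 0 (piGen m / 2)) ∧
    s (piGen m / 2) = 1 ∧
    ∀ y ∈ Set.Icc (0:ℝ) (piGen m / 2),
      (∫ t in (0:ℝ)..(s y), ((1 - t ^ (2 * m) : ℝ) ^ (-(1:ℝ)/2))) = y := by
  set P := piGen m / 2 with hPdef
  have hFP : Ffun m 1 = P := by
    rw [hPdef, piGen]
    show (∫ t in (0:ℝ)..1, gfun m t) = _
    unfold gfun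
    ring
  have hP0 : 0 < P := by
    rw [← hFP, ← Ffun_zero m]
    exact Ffun_lt m hm le_rfl zero_lt_one
  set A := {x : ℝ | x ∈ Icc 0 P ∧ ∀ t ∈ Icc 0 x, 0 < deriv s t} with hA
  have h0A : (0:ℝ) ∈ A := by
    refine ⟨⟨le_rfl, hP0.le⟩, fun t ht => ?_⟩
    have : t = 0 := le_antisymm ht.2 ht.1
    rw [this, hs.2.2.2]
    norm_num
  have hbdd : BddAbove A := ⟨P, fun x hx => hx.1.2⟩
  set c := sSup A with hc
  have hc0 : 0 ≤ c := le_csSup hbdd h0A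
  have hcP : c ≤ P := csSup_le ⟨0, h0A⟩ (fun x hx => hx.1.2)
  have hlt : ∀ t ∈ Ico 0 c, 0 < deriv s t := by
    intro t ht
    obtain ⟨x, hxA, hx⟩ := exists_lt_of_lt_csSup ⟨0, h0A⟩ ht.2
    exact hxA.2 t ⟨ht.1, hx.le⟩
  have hFc : ∀ x ∈ Icc 0 c, Ffun m (s x) = x := sine_inverts hm hs hlt
  have hmono : MonotoneOn s (Icc 0 c) := by
    apply monotoneOn_of_deriv_nonneg (convex_Icc 0 c)
      (sine_diff hm hs).continuous.continuousOn
      ((sine_diff hm hs).differentiableOn)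
    intro x hx
    rw [interior_Icc] at hx
    exact (hlt x ⟨hx.1.le, hx.2⟩).le
  have hs_mem : ∀ x ∈ Icc 0 c, 0 ≤ s x ∧ s x ≤ 1 := by
    intro x hx
    constructor
    · have := hmono ⟨le_rfl, hc0⟩ hx hx.1
      rw [hs.2.2.1] at this
      exact this
    · have h1 := sine_sq_le hm hs x
      have h2 : 0 ≤ s x := by
        have := hmono ⟨le_rfl, hc0⟩ hx hx.1
        rw [hs.2.2.1] at this
        exact this
      exact (pow_le_one_iff_of_nonneg h2 (by omega)).mp h1
  have hceq : c = P := by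
    by_contra hne
    have hcltP : c < P := lt_of_le_of_ne hcP hne
    have hcmem : c ∈ Icc 0 c := ⟨hc0, le_rfl⟩
    have hsc1 : s c < 1 := by
      rcases lt_or_eq_of_le (hs_mem c hcmem).2 with h | h
      · exact h
      · exfalso
        have := hFc c hcmem
        rw [h, hFP] at this
        linarith
    have hscpow : s c ^ (2*m) < 1 :=
      pow_lt_one₀ (hs_mem c hcmem).1 hsc1 (by omega)
    have hen := sine_energy hm hs c
    have hge : 0 ≤ deriv s c := by
      rcases eq_or_lt_of_le hc0 with h | h
      · rw [← h, hs.2.2.2]; norm_num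
      · have htend : Filter.Tendsto (deriv s) (nhdsWithin c (Iio c)) (nhds (deriv s c)) :=
          ((sine_deriv_cont hm hs).tendsto c).mono_left nhdsWithin_le_nhds
        apply ge_of_tendsto htend
        filter_upwards [Ioo_mem_nhdsLT_of_mem (show c ∈ Ioc 0 c from ⟨h, le_rfl⟩)] with t ht
        exact (hlt t ⟨ht.1.le, ht.2⟩).le
    have hdc : 0 < deriv s c := by
      rcases eq_or_lt_of_le hge with h | h
      · exfalso; rw [← h] at hen; simp at hen; linarith
      · exact h
    have hev : ∀ᶠ t in nhds c, 0 < deriv s t :=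
      (sine_deriv_cont hm hs).continuousAt (Ioi_mem_nhds hdc)
    rw [Metric.eventually_nhds_iff] at hev
    obtain ⟨δ, hδ, hball⟩ := hev
    set x := min (c + δ/2) P with hx
    have hxA : x ∈ A := by
      refine ⟨⟨le_trans hc0 (le_min (by linarith) hcltP.le), min_le_right _ _⟩,
        fun t ht => ?_⟩
      rcases lt_or_ge t c with h | h
      · exact hlt t ⟨ht.1, h⟩
      · apply hball
        rw [Real.dist_eq, abs_of_nonneg (by linarith)]
        have : t ≤ c + δ/2 := le_trans ht.2 (min_le_left _ _)
        linarith
    have hxc := le_csSup hbdd hxA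
    have hxgt : c < x := lt_min (by linarith) hcltP
    linarith
  rw [hceq] at hFc hlt hs_mem
  have hsP1 : s P = 1 := by
    rcases lt_or_eq_of_le (hs_mem P ⟨hP0.le, le_rfl⟩).2 with h | h
    · exfalso
      have h1 := hFc P ⟨hP0.le, le_rfl⟩
      have h2 := Ffun_lt m hm (hs_mem P ⟨hP0.le, le_rfl⟩).1 h
      rw [h1, hFP] at h2
      linarith
    · exact h
  refine ⟨?_, hsP1, ?_⟩
  · apply strictMonoOn_of_deriv_pos (convex_Icc 0 P)
      (sine_diff hm hs).continuous.continuousOn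
    intro x hx
    rw [interior_Icc] at hx
    exact hlt x ⟨hx.1.le, hx.2⟩
  · intro y hy
    exact hFc y hy
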